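/- arXiv:2506.13383 — 3 statements merged into one kernel-verified Lean document; each statement's English description precedes it below -/
import Mathlib

section
/- If L is a regular language over the push-pop alphabet Σ, then zip(poppush(filter(pushpop(L)))) is a regular language over the zipped alphabet. -/
/-- The push-pop alphabet `Σ = {push v, pop v | v ∈ V}`:
`Sum.inl v` is `push v`, `Sum.inr v` is `pop v`. -/
abbrev Alph (V : Type) : Type := V ⊕ V

/-- The letter `push v`. -/
def pushSym {V : Type} (v : V) : Alph V := Sum.inl v

/-- The letter `pop v`. -/
def popSym {V : Type} (v : V) : Alph V := Sum.inr v

/-- `pushpop(L)`: the least language containing `L` closed under the rule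
"if `x · push v · pop v · y ∈ pushpop(L)` then `x · y ∈ pushpop(L)`". -/
inductive PushPop {V : Type} (L : Language (Alph V)) : List (Alph V) → Prop
  | base {x : List (Alph V)} : x ∈ L → PushPop L x
  | step {x y : List (Alph V)} {v : V} :
      PushPop L (x ++ pushSym v :: popSym v :: y) → PushPop L (x ++ y)

/-- `pushpop(L)` as a language. -/
def pushpopCl {V : Type} (L : Language (Alph V)) : Language (Alph V) := {x | PushPop L x}

/-- `L_{pop*push*}`: words in which no pop occurs after a push, i.e. a block of pops
followed by a block of pushes. -/
def PopsThenPushes {V : Type} : Language (Alph V) :=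
  {w | ∃ p q : List V, w = p.map popSym ++ q.map pushSym}

/-- `filter(L) := L ∩ L_{pop*push*}`. -/
def filterL {V : Type} (L : Language (Alph V)) : Language (Alph V) :=
  {w | w ∈ L ∧ w ∈ PopsThenPushes}

/-- `poppush(L)`: the least language containing `L` closed under the rule
"if `x · y ∈ poppush(L)` with `x` all pops and `y` all pushes, then
`x · pop v · push v · y ∈ poppush(L)` for every `v`". -/
inductive PopPush {V : Type} (L : Language (Alph V)) : List (Alph V) → Prop
  | base {x : List (Alph V)} : x ∈ L → PopPush L x
  | step {p q : List V} {v : V} :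
      PopPush L (p.map popSym ++ q.map pushSym) →
      PopPush L (p.map popSym ++ popSym v :: pushSym v :: q.map pushSym)

/-- `poppush(L)` as a language. -/
def poppushCl {V : Type} (L : Language (Alph V)) : Language (Alph V) := {x | PopPush L x}

/-- The zipped alphabet: pairs whose first component is a pop symbol or `done` (`none`)
and whose second component is a push symbol or `done` (`none`). -/
abbrev ZAlph (V : Type) : Type := Option V × Option V

/-- Zip together a list of pop values (innermost, i.e. last, pop first) with a list of
push values (first push first), padding with `done` (`none`). -/
def zipAux {V : Type} : List V → List V → List (ZAlph V)
  | [], [] => []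
  | v :: p, [] => (some v, none) :: zipAux p []
  | [], w :: q => (none, some w) :: zipAux [] q
  | v :: p, w :: q => (some v, some w) :: zipAux p q

/-- Read off the maximal prefix of pop letters, returning the popped values in order
together with the remaining suffix. -/
def takePops {V : Type} : List (Alph V) → List V × List (Alph V)
  | Sum.inr v :: r => ((takePops r).1.cons v, (takePops r).2)
  | w => ([], w)

/-- If the word consists only of push letters, return their values in order; else `none`. -/
def asPushes {V : Type} : List (Alph V) → Option (List V)
  | [] => some []
  | Sum.inl v :: r => (asPushes r).map (v :: ·)
  | Sum.inr _ :: _ => none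

/-- `zip`: the partial function on `Σ*` defined only on words of the form pops-then-pushes,
pairing the last pop with the first push, and so on outwards, padding with `done`. -/
def zipWord {V : Type} (w : List (Alph V)) : Option (List (ZAlph V)) :=
  (asPushes (takePops w).2).map fun q => zipAux (takePops w).1.reverse q

/-- `zip(L) := { zip(x) | x ∈ L, zip(x) defined }`. -/
def zipLang {V : Type} (L : Language (Alph V)) : Language (ZAlph V) :=
  {z | ∃ w ∈ L, zipWord w = some z}

/-!
`pushpop(L)` is recognised by the saturation of a DFA for `L`: after each letter the automaton
may silently read any word that cancels to `ε`. Intersecting with the regular language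
`pop* push*` gives a regular language `R` of words `pops(p) · pushes(q)`. Its zip is a finite
union, over the DFA state `m` reached after the pops, of padded zips of two regular languages
(the reversed pop sequences leading to `m`, the push sequences accepted from `m`), and a padded
zip of two regular languages is recognised by running both automata side by side. Finally,
`poppush` only inserts pairs `pop v · push v` at the junction, which become leading diagonal
letters `(v, v)` after zipping, so `zip(poppush(R)) = {(v, v)}* · zip(R)`; regular languages are
closed under concatenation by the Myhill–Nerode theorem.
-/

namespace Language

variable {α : Type*}

theorem mem_leftQuotient_mul {L₁ L₂ : Language α} {x y : List α} :
    y ∈ (L₁ * L₂).leftQuotient x ↔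
      (∃ x₁ ∈ L₁, ∃ x₂, x₁ ++ x₂ = x ∧ y ∈ L₂.leftQuotient x₂) ∨ y ∈ L₁.leftQuotient x * L₂ := by
  simp only [mem_leftQuotient, mem_mul]
  constructor
  · rintro ⟨a, ha, b, hb, hab⟩
    rcases List.append_eq_append_iff.mp hab with ⟨c, rfl, rfl⟩ | ⟨c, rfl, rfl⟩
    · exact Or.inl ⟨a, ha, c, rfl, hb⟩
    · exact Or.inr ⟨c, ha, b, hb, rfl⟩
  · rintro (⟨a, ha, c, rfl, hc⟩ | ⟨c, hc, b, hb, rfl⟩)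
    · exact ⟨a, ha, c ++ y, hc, by simp⟩
    · exact ⟨x ++ c, hc, b, hb, by simp⟩

/-- A left quotient of `L₁ * L₂` is determined by one left quotient of `L₁` and a set of left
quotients of `L₂`, so there are finitely many. -/
theorem IsRegular.mul {L₁ L₂ : Language α} (h₁ : L₁.IsRegular) (h₂ : L₂.IsRegular) :
    (L₁ * L₂).IsRegular := by
  refine .of_finite_range_leftQuotient <|
    ((h₂.finite_range_leftQuotient.finite_subsets.prod h₁.finite_range_leftQuotient).image
      fun p : Set (Language α) × Language α =>
        ({y | (∃ q ∈ p.1, y ∈ q) ∨ y ∈ p.2 * L₂} : Language α)).subset ?_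
  rintro _ ⟨x, rfl⟩
  refine ⟨({q | ∃ x₁ ∈ L₁, ∃ x₂, x₁ ++ x₂ = x ∧ q = L₂.leftQuotient x₂}, L₁.leftQuotient x),
    ⟨?_, Set.mem_range_self x⟩, ?_⟩
  · rintro _ ⟨-, -, x₂, -, rfl⟩
    exact Set.mem_range_self x₂
  · refine Language.ext fun y => ?_
    rw [mem_leftQuotient_mul]
    refine or_congr_left ⟨?_, ?_⟩
    · rintro ⟨_, ⟨x₁, h₁, x₂, hx, rfl⟩, hy⟩
      exact ⟨x₁, h₁, x₂, hx, hy⟩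
    · rintro ⟨x₁, h₁, x₂, hx, hy⟩
      exact ⟨_, ⟨x₁, h₁, x₂, hx, rfl⟩, hy⟩

theorem isRegular_iSup {ι : Type*} [Finite ι] {L : ι → Language α} (h : ∀ i, (L i).IsRegular) :
    (⨆ i, L i).IsRegular := by
  refine .of_finite_range_leftQuotient <|
    ((Set.Finite.pi fun i => (h i).finite_range_leftQuotient).image
      fun g : ι → Language α => ⨆ i, g i).subset ?_
  rintro _ ⟨x, rfl⟩
  refine ⟨fun i => (L i).leftQuotient x, fun i _ => Set.mem_range_self x, ?_⟩
  ext y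
  simp [mem_iSup]

def rangeMap {β : Type*} (f : β → α) : Language α := Set.range (List.map f)

theorem isRegular_rangeMap {β : Type*} (f : β → α) : (rangeMap f).IsRegular := by
  refine .of_finite_range_leftQuotient <|
    (Set.finite_range fun p : Prop => ({y | p ∧ y ∈ Set.range (List.map f)} : Language α)).subset ?_
  rintro _ ⟨x, rfl⟩
  refine ⟨x ∈ Set.range (List.map f), ?_⟩
  refine Language.ext fun y => ?_
  show x ∈ Set.range (List.map f) ∧ y ∈ Set.range (List.map f) ↔ x ++ y ∈ Set.range (List.map f)
  simp [Set.range_list_map, or_imp, forall_and]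

end Language

theorem NFA.acceptsFrom_mono {α σ : Type*} (M : NFA α σ) {S T : Set σ} (h : S ⊆ T) :
    M.acceptsFrom S ≤ M.acceptsFrom T := by
  rw [← Set.union_eq_right.mpr h, NFA.acceptsFrom_union]
  exact le_add_right le_rfl

theorem NFA.mem_acceptsFrom_iff_exists {α σ : Type*} {M : NFA α σ} {S : Set σ} {x : List α} :
    x ∈ M.acceptsFrom S ↔ ∃ s ∈ S, x ∈ M.acceptsFrom {s} := by
  constructor
  · rintro ⟨t, ht, hts⟩
    obtain ⟨s, hs, h⟩ := NFA.mem_evalFrom_iff_exists.mp hts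
    exact ⟨s, hs, t, ht, h⟩
  · rintro ⟨s, hs, t, ht, h⟩
    exact ⟨t, ht, NFA.mem_evalFrom_iff_exists.mpr ⟨s, hs, h⟩⟩

theorem NFA.isRegular_accepts {α σ : Type*} [Finite σ] (M : NFA α σ) : M.accepts.IsRegular :=
  Language.isRegular_iff.mpr ⟨Set σ, Fintype.ofFinite _, M.toDFA, M.toDFA_correct⟩

theorem DFA.isRegular_setOf_evalFrom_mem {α σ : Type*} [Fintype σ] (M : DFA α σ) (s : σ)
    (S : Set σ) : Language.IsRegular ({w | M.evalFrom s w ∈ S} : Language α) :=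
  Language.isRegular_iff.mpr ⟨σ, inferInstance, ⟨M.step, s, S⟩, rfl⟩

theorem Language.IsRegular.preimage_map {α β : Type*} {L : Language α} (hL : L.IsRegular)
    (f : β → α) : IsRegular (List.map f ⁻¹' L : Language β) := by
  obtain ⟨σ, _, M, rfl⟩ := hL
  exact ⟨σ, inferInstance, M.comap f, M.accepts_comap f⟩

section PushPop

variable {V : Type}

open Relation

def CancelStep (w x : List (Alph V)) : Prop :=
  ∃ u t v, w = u ++ pushSym v :: popSym v :: t ∧ x = u ++ t

theorem CancelStep.reflTransGen_append {w x : List (Alph V)}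
    (h : ReflTransGen CancelStep w x) (u t : List (Alph V)) :
    ReflTransGen CancelStep (u ++ w ++ t) (u ++ x ++ t) := by
  refine h.lift (fun w => u ++ w ++ t) ?_
  rintro _ _ ⟨u', t', v, rfl, rfl⟩
  exact ⟨u ++ u', t' ++ t, v, by simp, by simp⟩

theorem CancelStep.reflTransGen_null_append {d w x : List (Alph V)}
    (hd : ReflTransGen CancelStep d []) (h : ReflTransGen CancelStep w x) :
    ReflTransGen CancelStep (d ++ w) x := by
  simpa using (CancelStep.reflTransGen_append hd [] w).trans h

theorem CancelStep.reflTransGen_push_pop {d₁ d₂ : List (Alph V)} (v : V)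
    (h₁ : ReflTransGen CancelStep d₁ []) (h₂ : ReflTransGen CancelStep d₂ []) :
    ReflTransGen CancelStep (pushSym v :: (d₁ ++ popSym v :: d₂)) [] := by
  have hd₁ := CancelStep.reflTransGen_append h₁ [pushSym v] (popSym v :: d₂)
  simp only [List.cons_append, List.nil_append] at hd₁
  exact hd₁.trans (.head ⟨[], d₂, v, rfl, rfl⟩ h₂)

theorem mem_pushpopCl_of_reflTransGen {L : Language (Alph V)} {w x : List (Alph V)}
    (hw : w ∈ L) (h : ReflTransGen CancelStep w x) : x ∈ pushpopCl L := by
  induction h with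
  | refl => exact .base hw
  | tail _ hxy ih =>
    obtain ⟨u, t, v, rfl, rfl⟩ := hxy
    exact PushPop.step ih

variable {σ : Type} (M : DFA (Alph V) σ)

def NullReach (q q' : σ) : Prop := ∃ d, ReflTransGen CancelStep d [] ∧ M.evalFrom q d = q'

namespace NullReach

variable {M}

theorem refl (q : σ) : NullReach M q q := ⟨[], .refl, rfl⟩

theorem trans {q₁ q₂ q₃ : σ} (h₁ : NullReach M q₁ q₂) (h₂ : NullReach M q₂ q₃) :
    NullReach M q₁ q₃ := by
  obtain ⟨d₁, hd₁, rfl⟩ := h₁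
  obtain ⟨d₂, hd₂, rfl⟩ := h₂
  exact ⟨d₁ ++ d₂, CancelStep.reflTransGen_null_append hd₁ hd₂, DFA.evalFrom_of_append ..⟩

theorem push_pop {q q₁ q₂ : σ} {v : V} (h₁ : NullReach M (M.step q (pushSym v)) q₁)
    (h₂ : NullReach M (M.step q₁ (popSym v)) q₂) : NullReach M q q₂ := by
  obtain ⟨d₁, hd₁, rfl⟩ := h₁
  obtain ⟨d₂, hd₂, rfl⟩ := h₂
  refine ⟨_, CancelStep.reflTransGen_push_pop v hd₁ hd₂, ?_⟩
  simp [DFA.evalFrom_of_append]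

end NullReach

def saturation : NFA (Alph V) σ where
  step q a := {q' | NullReach M (M.step q a) q'}
  start := {q | NullReach M M.start q}
  accept := M.accept

theorem saturation_sound {q : σ} {x : List (Alph V)}
    (hx : x ∈ (saturation M).acceptsFrom {q' | NullReach M q q'}) :
    ∃ w ∈ M.acceptsFrom q, ReflTransGen CancelStep w x := by
  induction x generalizing q with
  | nil =>
    obtain ⟨_, ⟨d, hd, rfl⟩, hacc⟩ := (NFA.nil_mem_acceptsFrom _).mp hx
    exact ⟨d, hacc, hd⟩
  | cons a x ih =>
    rw [NFA.cons_mem_acceptsFrom, NFA.stepSet, NFA.acceptsFrom_iUnion₂] at hx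
    obtain ⟨_, ⟨d, hd, rfl⟩, hx⟩ := Set.mem_iUnion₂.mp hx
    obtain ⟨w, hw, hwx⟩ := ih hx
    refine ⟨d ++ a :: w, ?_, CancelStep.reflTransGen_null_append hd ?_⟩
    · rwa [DFA.mem_acceptsFrom, DFA.evalFrom_of_append, DFA.evalFrom_cons]
    · simpa using CancelStep.reflTransGen_append hwx [a] []

theorem saturation_eval_closed {x : List (Alph V)} {q q' : σ} (hq : q ∈ (saturation M).eval x)
    (h : NullReach M q q') : q' ∈ (saturation M).eval x := by
  rcases x.eq_nil_or_concat with rfl | ⟨x, a, rfl⟩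
  · exact NullReach.trans hq h
  · rw [List.concat_eq_append, NFA.eval_append_singleton, NFA.mem_stepSet] at hq ⊢
    obtain ⟨s, hs, hq⟩ := hq
    exact ⟨s, hs, NullReach.trans hq h⟩

theorem mem_saturation_acceptsFrom {S : Set σ} {q : σ} (hq : q ∈ S) {w : List (Alph V)}
    (hw : w ∈ M.acceptsFrom q) : w ∈ (saturation M).acceptsFrom S := by
  induction w generalizing q S with
  | nil => exact (NFA.nil_mem_acceptsFrom _).mpr ⟨q, hq, hw⟩
  | cons a w ih =>
    rw [NFA.cons_mem_acceptsFrom]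
    exact ih (NFA.mem_stepSet.mpr ⟨q, hq, NullReach.refl _⟩) hw

theorem saturation_accepts_of_cancel {x y : List (Alph V)} {v : V}
    (h : x ++ pushSym v :: popSym v :: y ∈ (saturation M).accepts) :
    x ++ y ∈ (saturation M).accepts := by
  rw [NFA.accepts_eq_acceptsFrom_start, NFA.append_mem_acceptsFrom] at h ⊢
  rw [NFA.cons_mem_acceptsFrom, NFA.cons_mem_acceptsFrom] at h
  refine NFA.acceptsFrom_mono _ (fun q₂ hq₂ => ?_) h
  obtain ⟨q₁, hq₁, h₂⟩ := NFA.mem_stepSet.mp hq₂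
  obtain ⟨q, hq, h₁⟩ := NFA.mem_stepSet.mp hq₁
  exact saturation_eval_closed M hq (NullReach.push_pop h₁ h₂)

theorem saturation_accepts : (saturation M).accepts = pushpopCl M.accepts := by
  ext x
  constructor
  · intro hx
    obtain ⟨w, hw, hwx⟩ := saturation_sound M hx
    exact mem_pushpopCl_of_reflTransGen hw hwx
  · intro hx
    induction hx with
    | base hw => exact mem_saturation_acceptsFrom M (NullReach.refl _) hw
    | step _ ih => exact saturation_accepts_of_cancel M ih

theorem Language.IsRegular.pushpopCl {L : Language (Alph V)} (hL : L.IsRegular) :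
    (pushpopCl L).IsRegular := by
  obtain ⟨σ, _, M, rfl⟩ := hL
  exact saturation_accepts M ▸ (saturation M).isRegular_accepts

end PushPop

section Zip

variable {V : Type}

def zipProd (A B : Language V) : Language (ZAlph V) := {z | ∃ a ∈ A, ∃ b ∈ B, zipAux a b = z}

theorem zipAux_append_append (t a b : List V) :
    zipAux (t ++ a) (t ++ b) = t.map (fun v => (some v, some v)) ++ zipAux a b := by
  induction t with
  | nil => rfl
  | cons v t ih => simp [zipAux, ih]

theorem zipAux_eq_nil_iff {a b : List V} : zipAux a b = [] ↔ a = [] ∧ b = [] := by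
  cases a <;> cases b <;> simp [zipAux]

theorem zipAux_eq_cons_iff {a b : List V} {c : ZAlph V} {z : List (ZAlph V)} :
    zipAux a b = c :: z ↔ c ≠ (none, none) ∧ ∃ a' b',
      a = c.1.toList ++ a' ∧ (c.1 = none → a' = []) ∧
      b = c.2.toList ++ b' ∧ (c.2 = none → b' = []) ∧ zipAux a' b' = z := by
  rcases c with ⟨_ | v, _ | w⟩ <;> cases a <;> cases b <;> simp [zipAux, and_assoc]

variable {σ : Type*} (M : DFA V σ)

/-- On one track of a zipped word, the state `none` means the track has ended: only `done` may
be read from then on. -/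
def trackLang : Option σ → Language V
  | some s => M.acceptsFrom s
  | none => 1

def trackStep : Option σ → Option V → Set (Option σ)
  | some s, some v => {some (M.step s v)}
  | some s, none => {x | x = none ∧ s ∈ M.accept}
  | none, some _ => ∅
  | none, none => {none}

theorem exists_trackStep_iff (x : Option σ) (o : Option V) (a : List V) :
    (∃ x' ∈ trackStep M x o, a ∈ trackLang M x') ↔
      o.toList ++ a ∈ trackLang M x ∧ (o = none → a = []) := by
  rcases x with _ | s <;> rcases o with _ | v
  · simp [trackStep, trackLang, Language.mem_one]
  · simp [trackStep, trackLang, Language.mem_one]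
  · simp only [trackStep, trackLang, Option.toList_none, List.nil_append]
    constructor
    · rintro ⟨_, ⟨rfl, hs⟩, rfl⟩
      exact ⟨hs, fun _ => rfl⟩
    · rintro ⟨ha, h⟩
      obtain rfl := h trivial
      exact ⟨none, ⟨rfl, ha⟩, rfl⟩
  · simp [trackStep, trackLang, DFA.mem_acceptsFrom, DFA.evalFrom_cons]

variable {τ : Type*} (N : DFA V τ)

def zipNFA : NFA (ZAlph V) (Option σ × Option τ) where
  step s c := {s' | c ≠ (none, none) ∧ s'.1 ∈ trackStep M s.1 c.1 ∧ s'.2 ∈ trackStep N s.2 c.2}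
  start := {(some M.start, some N.start)}
  accept := {s | [] ∈ trackLang M s.1 ∧ [] ∈ trackLang N s.2}

theorem mem_zipNFA_acceptsFrom (x : Option σ) (y : Option τ) (z : List (ZAlph V)) :
    z ∈ (zipNFA M N).acceptsFrom {(x, y)} ↔
      ∃ a ∈ trackLang M x, ∃ b ∈ trackLang N y, zipAux a b = z := by
  induction z generalizing x y with
  | nil =>
    simp only [NFA.nil_mem_acceptsFrom, zipAux_eq_nil_iff]
    constructor
    · rintro ⟨_, rfl, ha, hb⟩
      exact ⟨[], ha, [], hb, rfl, rfl⟩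
    · rintro ⟨_, ha, _, hb, rfl, rfl⟩
      exact ⟨_, rfl, ha, hb⟩
  | cons c z ih =>
    rw [NFA.cons_mem_acceptsFrom, NFA.stepSet_singleton, NFA.mem_acceptsFrom_iff_exists]
    simp only [zipAux_eq_cons_iff]
    constructor
    · rintro ⟨⟨x', y'⟩, ⟨hc, hx', hy'⟩, hz⟩
      obtain ⟨a', ha', b', hb', rfl⟩ := (ih x' y').mp hz
      obtain ⟨ha, ha'⟩ := (exists_trackStep_iff M x c.1 a').mp ⟨x', hx', ha'⟩
      obtain ⟨hb, hb'⟩ := (exists_trackStep_iff N y c.2 b').mp ⟨y', hy', hb'⟩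
      exact ⟨_, ha, _, hb, hc, a', b', rfl, ha', rfl, hb', rfl⟩
    · rintro ⟨_, ha, _, hb, hc, a', b', rfl, ha', rfl, hb', rfl⟩
      obtain ⟨x', hx', ha'⟩ := (exists_trackStep_iff M x c.1 a').mpr ⟨ha, ha'⟩
      obtain ⟨y', hy', hb'⟩ := (exists_trackStep_iff N y c.2 b').mpr ⟨hb, hb'⟩
      exact ⟨(x', y'), ⟨hc, hx', hy'⟩, (ih x' y').mpr ⟨a', ha', b', hb', rfl⟩⟩

theorem zipNFA_accepts :
    (zipNFA M N).accepts = zipProd M.accepts N.accepts :=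
  Language.ext fun z => mem_zipNFA_acceptsFrom M N (some M.start) (some N.start) z

theorem Language.IsRegular.zipProd {A B : Language V} (hA : A.IsRegular) (hB : B.IsRegular) :
    (zipProd A B).IsRegular := by
  obtain ⟨σ, _, M, rfl⟩ := hA
  obtain ⟨τ, _, N, rfl⟩ := hB
  exact zipNFA_accepts M N ▸ (zipNFA M N).isRegular_accepts

end Zip

section PopsThenPushes

variable {V : Type}

theorem popsThenPushes_eq_mul :
    (PopsThenPushes : Language (Alph V)) =
      Language.rangeMap popSym * Language.rangeMap pushSym := by
  ext w
  rw [Language.mem_mul]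
  constructor
  · rintro ⟨p, q, rfl⟩
    exact ⟨_, ⟨p, rfl⟩, _, ⟨q, rfl⟩, rfl⟩
  · rintro ⟨_, ⟨p, rfl⟩, _, ⟨q, rfl⟩, rfl⟩
    exact ⟨p, q, rfl⟩

theorem isRegular_popsThenPushes : (PopsThenPushes : Language (Alph V)).IsRegular :=
  popsThenPushes_eq_mul ▸ (Language.isRegular_rangeMap _).mul (Language.isRegular_rangeMap _)

theorem takePops_pops_append_pushes (p q : List V) :
    takePops (p.map popSym ++ q.map pushSym) = (p, q.map pushSym) := by
  induction p with
  | nil => cases q <;> rfl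
  | cons v p ih => simp [popSym, takePops, ih]

theorem asPushes_map_pushSym (q : List V) : asPushes (q.map pushSym) = some q := by
  induction q with
  | nil => rfl
  | cons v q ih => simp [pushSym, asPushes, ih]

theorem zipWord_pops_append_pushes (p q : List V) :
    zipWord (p.map popSym ++ q.map pushSym) = some (zipAux p.reverse q) := by
  simp [zipWord, takePops_pops_append_pushes, asPushes_map_pushSym]

/-- Split on the state `m` reached after the pops. Zip pairs the innermost pop first, so the pop
track lists the pops in reverse. -/
theorem zipLang_eq_iSup {τ : Type*} (M : DFA (Alph V) τ) (hM : M.accepts ≤ PopsThenPushes) :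
    zipLang M.accepts = ⨆ m, zipProd (Language.reverse (List.map popSym ⁻¹' {w | M.eval w = m}))
      (List.map pushSym ⁻¹' M.acceptsFrom m) := by
  ext z
  rw [Language.mem_iSup]
  constructor
  · rintro ⟨w, hw, hz⟩
    obtain ⟨p, q, rfl⟩ := hM hw
    rw [zipWord_pops_append_pushes, Option.some_inj] at hz
    refine ⟨M.eval (p.map popSym), p.reverse, ?_, q, ?_, hz⟩
    · show M.eval (p.reverse.reverse.map popSym) = M.eval (p.map popSym)
      rw [List.reverse_reverse]
    · rwa [DFA.mem_accepts, DFA.eval, DFA.evalFrom_of_append] at hw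
  · rintro ⟨m, a, ha, b, hb, rfl⟩
    refine ⟨a.reverse.map popSym ++ b.map pushSym, ?_, ?_⟩
    · have ha : M.evalFrom M.start (a.reverse.map popSym) = m := ha
      rw [DFA.mem_accepts, DFA.eval, DFA.evalFrom_of_append, ha]
      exact hb
    · rw [zipWord_pops_append_pushes, List.reverse_reverse]

theorem Language.IsRegular.zipLang {R : Language (Alph V)} (hR : R.IsRegular)
    (hPP : R ≤ PopsThenPushes) : (zipLang R).IsRegular := by
  obtain ⟨τ, _, M, rfl⟩ := hR
  rw [zipLang_eq_iSup M hPP]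
  exact isRegular_iSup fun m =>
    ((M.isRegular_setOf_evalFrom_mem M.start {m}).preimage_map popSym).reverse.zipProd
      ((M.isRegular_setOf_evalFrom_mem m M.accept).preimage_map pushSym)

theorem PopPush.pops_append_pushes {R : Language (Alph V)} {p q : List V}
    (h : PopPush R (p.map popSym ++ q.map pushSym)) (t : List V) :
    PopPush R ((p ++ t.reverse).map popSym ++ (t ++ q).map pushSym) := by
  induction t with
  | nil => simpa using h
  | cons v t ih => simpa using ih.step (v := v)

theorem zipLang_poppushCl {R : Language (Alph V)} (hR : R ≤ PopsThenPushes) :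
    zipLang (poppushCl R) = Language.rangeMap (fun v : V => (some v, some v)) * zipLang R := by
  ext z
  rw [Language.mem_mul]
  constructor
  · rintro ⟨w, hw, hz⟩
    induction hw generalizing z with
    | base hw => exact ⟨[], ⟨[], rfl⟩, z, ⟨_, hw, hz⟩, rfl⟩
    | @step p q v _ ih =>
      obtain ⟨_, ⟨t, rfl⟩, z', hz', htz⟩ := ih _ (zipWord_pops_append_pushes p q)
      have := zipWord_pops_append_pushes (p ++ [v]) (v :: q)
      simp only [List.map_append, List.map_cons, List.map_nil, List.append_assoc,
        List.cons_append, List.nil_append, List.reverse_append, List.reverse_cons,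
        List.reverse_nil, zipAux] at this
      rw [this, Option.some_inj, ← htz] at hz
      exact ⟨_, ⟨v :: t, rfl⟩, z', hz', hz⟩
  · rintro ⟨_, ⟨t, rfl⟩, z', ⟨w, hw, hz'⟩, rfl⟩
    obtain ⟨p, q, rfl⟩ := hR hw
    rw [zipWord_pops_append_pushes, Option.some_inj] at hz'
    refine ⟨_, (PopPush.base hw).pops_append_pushes t, ?_⟩
    rw [zipWord_pops_append_pushes, List.reverse_append, List.reverse_reverse,
      zipAux_append_append, hz']

end PopsThenPushes

theorem stmt8_general {V : Type} (L : Language (Alph V))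
    (hL : L.IsRegular) :
    (zipLang (poppushCl (filterL (pushpopCl L)))).IsRegular := by
  have hPP : filterL (pushpopCl L) ≤ PopsThenPushes := fun _ h => h.2
  rw [zipLang_poppushCl hPP]
  exact (Language.isRegular_rangeMap _).mul
    ((hL.pushpopCl.inf isRegular_popsThenPushes).zipLang hPP)

/-- If `L` is regular over the push-pop alphabet, then
`zip(poppush(filter(pushpop(L))))` is regular over the zipped alphabet. -/
theorem stmt8 {V : Type} [Fintype V] [Nonempty V] (L : Language (Alph V))
    (hL : L.IsRegular) :
    (zipLang (poppushCl (filterL (pushpopCl L)))).IsRegular :=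
  stmt8_general L hL
end

section
/- For every language L over the push-pop alphabet Σ, the two semantic interpretations agree on the canonicalized language: [overline(L)] = [overline(L)]', where overline(L) := poppush(filter(pushpop(L))). -/
/-- Push-pop StacKAT expressions: regular-expression terms over push/pop of values in `V`. -/
inductive Exp (V : Type) : Type
  | zero : Exp V
  | one : Exp V
  | plus : Exp V → Exp V → Exp V
  | seq : Exp V → Exp V → Exp V
  | star : Exp V → Exp V
  | push : V → Exp V
  | pop : V → Exp V

/-- `n`-fold relational composition of a relation. -/
def relPow {α : Type*} (r : α → α → Prop) : ℕ → α → α → Prop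
  | 0 => Eq
  | n + 1 => Relation.Comp r (relPow r n)

/-- The relational semantics of a push-pop StacKAT expression, as a binary relation on stacks. -/
def denote {V : Type} : Exp V → List V → List V → Prop
  | Exp.zero => fun _ _ => False
  | Exp.one => Eq
  | Exp.plus e f => fun s t => denote e s t ∨ denote f s t
  | Exp.seq e f => Relation.Comp (denote e) (denote f)
  | Exp.star e => fun s t => ∃ n, relPow (denote e) n s t
  | Exp.push v => fun s t => t = v :: s
  | Exp.pop v => fun s t => s = v :: t

/-- The regular language `L(e) ⊆ Σ*` of a push-pop expression viewed as a regular
expression over the push-pop alphabet. -/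
def lang {V : Type} : Exp V → Language (Alph V)
  | Exp.zero => 0
  | Exp.one => 1
  | Exp.plus e f => lang e + lang f
  | Exp.seq e f => lang e * lang f
  | Exp.star e => KStar.kstar (lang e)
  | Exp.push v => {[pushSym v]}
  | Exp.pop v => {[popSym v]}

/-- The relation on stacks denoted by a single letter. -/
def letterRel {V : Type} : Alph V → List V → List V → Prop
  | Sum.inl v => fun s t => t = v :: s
  | Sum.inr v => fun s t => s = v :: t

/-- The relation on stacks denoted by a word `x ∈ Σ*`: the composition of the letter
relations (`⟦ε⟧` is the identity). -/
def wordRel {V : Type} : List (Alph V) → List V → List V → Prop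
  | [] => Eq
  | a :: x => Relation.Comp (letterRel a) (wordRel x)

/-- `[L] := ⋃_{x ∈ L} ⟦x⟧`: the relational interpretation of a language. -/
def langRel {V : Type} (L : Language (Alph V)) : List V → List V → Prop :=
  fun s t => ∃ x ∈ L, wordRel x s t

/-- `overline(L) := poppush(filter(pushpop(L)))`. -/
def overlineL {V : Type} (L : Language (Alph V)) : Language (Alph V) :=
  poppushCl (filterL (pushpopCl L))

/-- The word `pop s₁ ⋯ pop sₙ` for a stack `s = s₁::…::sₙ`. -/
def popWord {V : Type} (s : List V) : List (Alph V) := s.map popSym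

/-- The word `push s'ₘ ⋯ push s'₁` for a stack `s' =s'₁::…::s'ₘ`. -/
def pushWord {V : Type} (s : List V) : List (Alph V) := s.reverse.map pushSym

/-- The alternative interpretation `[L]' := { (s, s') | pop(s) · push(s') ∈ L }`. -/
def langRel' {V : Type} (L : Language (Alph V)) : List V → List V → Prop :=
  fun s s' => popWord s ++ pushWord s' ∈ L

/-!
Every word of `poppush(M)`, for `M ⊆ L_{pop*push*}`, has the shape `pop(p) · push(q)`, and such a
word relates `s` to `t` exactly when `s = p ++ u` and `t = reverse q ++ u` for some untouched
stack `u`. The poppush rule inserts `pop(u) · push(u)` between the two blocks, which turns the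
word into `pop(s) · push(t)`; conversely `pop(s) · push(t)` itself relates `s` to `t`.
-/

theorem wordRel_append {V : Type} (x y : List (Alph V)) :
    wordRel (x ++ y) = Relation.Comp (wordRel x) (wordRel y) := by
  induction x with
  | nil => funext s t; simp [wordRel, Relation.Comp]
  | cons a x ih => rw [List.cons_append, wordRel, wordRel, ih, Relation.comp_assoc]

theorem wordRel_map_popSym {V : Type} (p s t : List V) :
    wordRel (p.map popSym) s t ↔ s = p ++ t := by
  induction p generalizing s with
  | nil => simp [wordRel, eq_comm]
  | cons v p ih => simp [wordRel, Relation.Comp, letterRel, popSym, ih]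

theorem wordRel_map_pushSym {V : Type} (q s t : List V) :
    wordRel (q.map pushSym) s t ↔ t = q.reverse ++ s := by
  induction q generalizing s with
  | nil => simp [wordRel, eq_comm]
  | cons v q ih => simp [wordRel, Relation.Comp, letterRel, pushSym, ih]

theorem wordRel_map_popSym_append_map_pushSym {V : Type} (p q s t : List V) :
    wordRel (p.map popSym ++ q.map pushSym) s t ↔ ∃ u, s = p ++ u ∧ t = q.reverse ++ u := by
  simp only [wordRel_append, Relation.Comp, wordRel_map_popSym, wordRel_map_pushSym]

theorem wordRel_popWord_append_pushWord {V : Type} (s t : List V) :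
    wordRel (popWord s ++ pushWord t) s t :=
  (wordRel_map_popSym_append_map_pushSym _ _ _ _).2 ⟨[], by simp, by simp⟩

theorem PopPush.mem_popsThenPushes {V : Type} {M : Language (Alph V)}
    (hM : M ≤ PopsThenPushes) {x : List (Alph V)} (h : PopPush M x) : x ∈ PopsThenPushes := by
  induction h with
  | base hx => exact hM hx
  | @step p q v _ _ => exact ⟨p ++ [v], v :: q, by simp⟩

theorem PopPush.insert_popWord_append_pushWord {V : Type} {M : Language (Alph V)}
    (u : List V) {p q : List V} (h : PopPush M (p.map popSym ++ q.map pushSym)) :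
    PopPush M (p.map popSym ++ popWord u ++ pushWord u ++ q.map pushSym) := by
  induction u generalizing p q with
  | nil => simpa [popWord, pushWord] using h
  | cons v u ih =>
    have h' := ih (p := p ++ [v]) (q := v :: q) (by simpa using PopPush.step (v := v) h)
    simpa [popWord, pushWord] using h'

theorem langRel'_le_langRel {V : Type} (M : Language (Alph V)) : langRel' M ≤ langRel M :=
  fun s t h => ⟨_, h, wordRel_popWord_append_pushWord s t⟩

theorem langRel_poppushCl_eq {V : Type} {M : Language (Alph V)} (hM : M ≤ PopsThenPushes) :
    langRel (poppushCl M) = langRel' (poppushCl M) := by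
  refine le_antisymm ?_ (langRel'_le_langRel _)
  rintro s t ⟨x, hx, hxst⟩
  obtain ⟨p, q, rfl⟩ := PopPush.mem_popsThenPushes hM hx
  obtain ⟨u, rfl, rfl⟩ := (wordRel_map_popSym_append_map_pushSym p q s t).1 hxst
  show PopPush M (popWord (p ++ u) ++ pushWord (q.reverse ++ u))
  simpa [popWord, pushWord] using PopPush.insert_popWord_append_pushWord u hx

theorem stmt11_general {V : Type} (L : Language (Alph V)) :
    langRel (overlineL L) = langRel' (overlineL L) :=
  langRel_poppushCl_eq fun _ hx => hx.2

/-- `[overline(L)] = [overline(L)]'`: the two semantic interpretations agree on the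
canonicalized language. -/
theorem stmt11 {V : Type} [Fintype V] [Nonempty V] (L : Language (Alph V)) :
    langRel (overlineL L) = langRel' (overlineL L) :=
  stmt11_general L
end

section
/- For all full StacKAT expressions e₁ and e₂: ⟦e₁⟧ = ⟦e₂⟧ if and only if for all headers α₁, α₂ : F → V, overline(traces_{α₁}^{α₂}(e₁)) = overline(traces_{α₁}^{α₂}(e₂)), where overline(L) := poppush(filter(pushpop(L))). -/
/-- Full StacKAT expressions: `0 | 1 | e+e | e·e | e* | f=v | f←v | push v | pop v`. -/
inductive FExp (F V : Type) : Type
  | zero : FExp F V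
  | one : FExp F V
  | plus : FExp F V → FExp F V → FExp F V
  | seq : FExp F V → FExp F V → FExp F V
  | star : FExp F V → FExp F V
  | test : F → V → FExp F V
  | assign : F → V → FExp F V
  | push : V → FExp F V
  | pop : V → FExp F V

/-- Header-indexed sequential composition of trace-language families:
`(T₁ ; T₂) α α' = ⋃_β T₁ α β · T₂ β α'`. -/
def seqTr {F V : Type} (T₁ T₂ : (F → V) → (F → V) → Language (Alph V)) :
    (F → V) → (F → V) → Language (Alph V) :=
  fun α α' => {w | ∃ β : F → V, ∃ w₁ ∈ T₁ α β, ∃ w₂ ∈ T₂ β α', w = w₁ ++ w₂}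

/-- The trace-language family of the `n`-th power `eⁿ` (`e⁰ = 1`, `eⁿ⁺¹ = eⁿ · e`). -/
def powTr {F V : Type} (T : (F → V) → (F → V) → Language (Alph V)) :
    ℕ → (F → V) → (F → V) → Language (Alph V)
  | 0 => fun α α' => {w | w = [] ∧ α = α'}
  | n + 1 => seqTr (powTr T n) T

/-- The trace language `traces_{α}^{α'}(e) ⊆ Σ*` of a full StacKAT expression,
for input header `α` and output header `α'`. -/
def traces {F V : Type} [DecidableEq F] : FExp F V → (F → V) → (F → V) → Language (Alph V)
  | FExp.zero => fun _ _ => (0 : Language (Alph V))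
  | FExp.one => fun α α' => {w | w = [] ∧ α = α'}
  | FExp.test f v => fun α α' => {w | w = [] ∧ α = α' ∧ α f = v}
  | FExp.assign f v => fun α α' => {w | w = [] ∧ α' = Function.update α f v}
  | FExp.push v => fun α α' => {w | w = [pushSym v] ∧ α = α'}
  | FExp.pop v => fun α α' => {w | w = [popSym v] ∧ α = α'}
  | FExp.plus e₁ e₂ => fun α α' => traces e₁ α α' + traces e₂ α α'
  | FExp.seq e₁ e₂ => seqTr (traces e₁) (traces e₂)
  | FExp.star e => fun α α' => {w | ∃ n : ℕ, w ∈ powTr (traces e) n α α'}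

/-- A packet: a header `α : F → V` together with a stack `s : List V`. -/
abbrev Packet (F V : Type) : Type := (F → V) × List V

/-- The packet semantics of a full StacKAT expression, as a binary relation on packets. -/
def fdenote {F V : Type} [DecidableEq F] : FExp F V → Packet F V → Packet F V → Prop
  | FExp.zero => fun _ _ => False
  | FExp.one => Eq
  | FExp.plus e f => fun p q => fdenote e p q ∨ fdenote f p q
  | FExp.seq e f => Relation.Comp (fdenote e) (fdenote f)
  | FExp.star e => fun p q => ∃ n, relPow (fdenote e) n p q
  | FExp.test f v => fun p q => q = p ∧ p.1 f = v
  | FExp.assign f v => fun p q => q = (Function.update p.1 f v, p.2)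
  | FExp.push v => fun p q => q = (p.1, v :: p.2)
  | FExp.pop v => fun p q => p = (q.1, v :: q.2)

section Aux
variable {V : Type}

lemma wordRel_append_s16 (x y : List (Alph V)) (s t : List V) :
    wordRel (x ++ y) s t ↔ ∃ u, wordRel x s u ∧ wordRel y u t := by
  induction x generalizing s with
  | nil => simp [wordRel]
  | cons a x ih =>
    simp only [List.cons_append, wordRel, Relation.Comp]
    constructor
    · rintro ⟨m, hm, h⟩
      rcases (ih m).1 h with ⟨u, h1, h2⟩
      exact ⟨u, ⟨m, hm, h1⟩, h2⟩
    · rintro ⟨u, ⟨m, hm, h1⟩, h2⟩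
      exact ⟨m, hm, (ih m).2 ⟨u, h1, h2⟩⟩

lemma wordRel_pops (p : List V) (s t : List V) :
    wordRel (p.map popSym) s t ↔ s = p ++ t := by
  induction p generalizing s with
  | nil => simp [wordRel]
  | cons v p ih =>
    simp only [List.map_cons, wordRel, Relation.Comp, letterRel, popSym]
    constructor
    · rintro ⟨u, h1, h2⟩
      rw [ih] at h2
      subst h2; subst h1; rfl
    · rintro rfl
      exact ⟨p ++ t, rfl, (ih _).2 rfl⟩

lemma wordRel_pushes (q : List V) (s t : List V) :
    wordRel (q.map pushSym) s t ↔ t = q.reverse ++ s := by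
  induction q generalizing s with
  | nil => simp [wordRel, eq_comm]
  | cons v q ih =>
    simp only [List.map_cons, wordRel, Relation.Comp, letterRel, pushSym]
    constructor
    · rintro ⟨u, rfl, h2⟩
      rw [ih] at h2
      simp [h2]
    · rintro rfl
      refine ⟨v :: s, rfl, ?_⟩
      rw [ih]; simp

lemma wordRel_mono (x : List (Alph V)) (s t r : List V) (h : wordRel x s t) :
    wordRel x (s ++ r) (t ++ r) := by
  induction x generalizing s with
  | nil => simp [wordRel] at h ⊢; exact h ▸ rfl
  | cons a x ih =>
    obtain ⟨u, h1, h2⟩ := h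
    refine ⟨u ++ r, ?_, ih u h2⟩
    cases a with
    | inl v => simp [letterRel] at h1 ⊢; simp [h1]
    | inr v => simp [letterRel] at h1 ⊢; simp [h1]

lemma pushPop_trans {L : Language (Alph V)} {w z : List (Alph V)}
    (h : PushPop {w} z) (hw : PushPop L w) : PushPop L z := by
  induction h with
  | base h => rwa [Set.mem_singleton_iff.mp h]
  | step _ ih => exact PushPop.step ih

lemma pushPop_wordRel {L : Language (Alph V)} {w : List (Alph V)} (h : PushPop L w) :
    ∀ s t, wordRel w s t → ∃ x ∈ L, wordRel x s t := by
  induction h with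
  | base h => exact fun s t hr => ⟨_, h, hr⟩
  | step _ ih =>
    intro s t hr
    apply ih
    rcases (wordRel_append_s16 _ _ _ _).1 hr with ⟨u, h1, h2⟩
    refine (wordRel_append_s16 _ _ _ _).2 ⟨u, h1, ?_⟩
    exact ⟨_, rfl, u, rfl, h2⟩

lemma split_or (w : List (Alph V)) :
    (∃ p q : List V, w = p.map popSym ++ q.map pushSym) ∨
    (∃ (x : List (Alph V)) (v u : V) (y : List (Alph V)),
      w = x ++ pushSym v :: popSym u :: y) := by
  induction w with
  | nil => exact Or.inl ⟨[], [], rfl⟩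
  | cons a w ih =>
    cases a with
    | inr v =>
      rcases ih with ⟨p, q, rfl⟩ | ⟨x, v', u, y, rfl⟩
      · exact Or.inl ⟨v :: p, q, rfl⟩
      · exact Or.inr ⟨Sum.inr v :: x, v', u, y, rfl⟩
    | inl v =>
      cases w with
      | nil => exact Or.inl ⟨[], [v], rfl⟩
      | cons b w' =>
        cases b with
        | inr u => exact Or.inr ⟨[], v, u, w', rfl⟩
        | inl u =>
          rcases ih with ⟨p, q, hw⟩ | ⟨x, v', u', y, hw2⟩
          · cases p with
            | nil =>
              refine Or.inl ⟨[], v :: q, ?_⟩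
              simp only [List.map_nil, List.nil_append] at hw ⊢
              rw [hw]; rfl
            | cons c cs => simp [popSym, pushSym] at hw
          · exact Or.inr ⟨Sum.inl v :: x, v', u', y, by rw [hw2]; rfl⟩

lemma reduce : ∀ (n : ℕ) (w : List (Alph V)), w.length ≤ n → ∀ s t, wordRel w s t →
    ∃ p q : List V, PushPop {w} (p.map popSym ++ q.map pushSym) ∧
      wordRel (List.map popSym p ++ List.map pushSym q) s t := by
  intro n
  induction n with
  | zero =>
    intro w hw s t hr
    rw [List.length_eq_zero_iff.mp (Nat.le_zero.mp hw)] at hr ⊢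
    exact ⟨[], [], PushPop.base rfl, hr⟩
  | succ n ih =>
    intro w hw s t hr
    rcases split_or w with ⟨p, q, rfl⟩ | ⟨x, v, u, y, rfl⟩
    · exact ⟨p, q, PushPop.base rfl, hr⟩
    · rcases (wordRel_append_s16 _ _ _ _).1 hr with ⟨m, h1, h2⟩
      obtain ⟨a, ha, b, hb, h3⟩ := h2
      simp only [letterRel, pushSym, popSym] at ha hb
      subst ha
      obtain ⟨rfl, rfl⟩ := List.cons.injEq .. ▸ hb
      · have hr' : wordRel (x ++ y) s t :=
          (wordRel_append_s16 _ _ _ _).2 ⟨m, h1, h3⟩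
        have hlen : (x ++ y).length ≤ n := by
          have := hw; simp at this ⊢; omega
        obtain ⟨p, q, hpp, hrel⟩ := ih (x ++ y) hlen s t hr'
        exact ⟨p, q, pushPop_trans hpp (PushPop.step (PushPop.base rfl)), hrel⟩

lemma popPush_pad (L : Language (Alph V)) :
    ∀ (r p₀ q₀ : List V),
    PopPush L (p₀.map popSym ++ q₀.map pushSym) →
    PopPush L ((p₀ ++ r).map popSym ++ (r.reverse ++ q₀).map pushSym) := by
  intro r
  induction r with
  | nil => intro p₀ q₀ h; simpa using h
  | cons v r ih =>
    intro p₀ q₀ h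
    have step := PopPush.step (p := p₀) (q := q₀) (v := v) h
    have heq : p₀.map popSym ++ popSym v :: pushSym v :: q₀.map pushSym
        = (p₀ ++ [v]).map popSym ++ ((v :: q₀)).map pushSym := by
      simp
    rw [heq] at step
    have := ih (p₀ ++ [v]) (v :: q₀) step
    have heq2 : ((p₀ ++ [v]) ++ r) = p₀ ++ (v :: r) := by simp
    have heq3 : (r.reverse ++ (v :: q₀)) = ((v :: r).reverse ++ q₀) := by simp
    rwa [heq2, heq3] at this

lemma pops_pushes_inj : ∀ {p p' q q' : List V},
    p.map popSym ++ q.map pushSym = p'.map popSym ++ q'.map pushSym →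
    p = p' ∧ q = q' := by
  intro p
  induction p with
  | nil =>
    intro p' q q' h
    cases p' with
    | nil =>
      simp only [List.map_nil, List.nil_append] at h
      exact ⟨rfl, List.map_injective_iff.mpr (fun a b hab => Sum.inl.inj hab) h⟩
    | cons c cs =>
      cases q with
      | nil => simp [popSym, pushSym] at h
      | cons d ds => simp [popSym, pushSym] at h
  | cons c cs ih =>
    intro p' q q' h
    cases p' with
    | nil =>
      cases q' with
      | nil => simp [popSym, pushSym] at h
      | cons d ds => simp [popSym, pushSym] at h
    | cons c' cs' =>
      simp only [List.map_cons, List.cons_append, List.cons.injEq] at h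
      obtain ⟨h1, h2⟩ := h
      obtain ⟨rfl, rfl⟩ := ih h2
      exact ⟨by rw [Sum.inr.inj h1], rfl⟩

lemma overline_char (L : Language (Alph V)) (w : List (Alph V)) :
    w ∈ overlineL L ↔ ∃ p q : List V, w = p.map popSym ++ q.map pushSym ∧
      langRel L p q.reverse := by
  constructor
  · intro h
    induction h with
    | base h =>
      obtain ⟨hL, p, q, rfl⟩ := h
      refine ⟨p, q, rfl, ?_⟩
      have hw : wordRel (p.map popSym ++ q.map pushSym) p q.reverse := by
        refine (wordRel_append_s16 _ _ _ _).2 ⟨[], ?_, ?_⟩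
        · rw [wordRel_pops]; simp
        · rw [wordRel_pushes]; simp
      exact pushPop_wordRel hL p q.reverse hw
    | step h ih =>
      obtain ⟨p', q', heq, x, hx, hr⟩ := ih
      obtain ⟨rfl, rfl⟩ := pops_pushes_inj heq
      rename_i p q v
      refine ⟨p ++ [v], v :: q, by simp, ?_⟩
      refine ⟨x, hx, ?_⟩
      have := wordRel_mono x p q.reverse [v] hr
      simpa using this
  · rintro ⟨p, q, rfl, x, hx, hr⟩
    obtain ⟨p₀, q₀, hpp, hrel⟩ := reduce x.length x le_rfl p q.reverse hr
    rcases (wordRel_append_s16 _ _ _ _).1 hrel with ⟨u, h1, h2⟩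
    rw [wordRel_pops] at h1
    rw [wordRel_pushes] at h2
    have hnf : (p₀.map popSym ++ q₀.map pushSym) ∈ filterL (pushpopCl L) :=
      ⟨pushPop_trans hpp (PushPop.base hx), p₀, q₀, rfl⟩
    have hpad := popPush_pad (filterL (pushpopCl L)) u p₀ q₀ (PopPush.base hnf)
    have hq : q = u.reverse ++ q₀ := by
      have : q.reverse.reverse = (q₀.reverse ++ u).reverse := by rw [← h2]
      simpa using this
    rw [← h1, ← hq] at hpad
    exact hpad

lemma langRel_iff_overline (L : Language (Alph V)) (s t : List V) :
    langRel L s t ↔ (s.map popSym ++ t.reverse.map pushSym) ∈ overlineL L := by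
  rw [overline_char]
  constructor
  · intro h
    exact ⟨s, t.reverse, rfl, by simpa using h⟩
  · rintro ⟨p, q, heq, h⟩
    obtain ⟨rfl, hq⟩ := pops_pushes_inj heq
    rw [← hq] at h
    simpa using h

lemma overline_eq_iff (L₁ L₂ : Language (Alph V)) :
    overlineL L₁ = overlineL L₂ ↔ langRel L₁ = langRel L₂ := by
  constructor
  · intro h
    funext s t
    rw [eq_iff_iff, langRel_iff_overline, langRel_iff_overline, h]
  · intro h
    ext w
    rw [overline_char, overline_char]
    simp only [h]

lemma relPow_succ' {α : Type*} (r : α → α → Prop) :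
    ∀ (n : ℕ) (a b : α), relPow r (n + 1) a b ↔ ∃ c, relPow r n a c ∧ r c b := by
  intro n
  induction n with
  | zero =>
    intro a b
    constructor
    · rintro ⟨c, h1, h2⟩; exact ⟨a, rfl, h2 ▸ h1⟩
    · rintro ⟨c, h1, h2⟩; exact ⟨b, h1 ▸ h2, rfl⟩
  | succ n ih =>
    intro a b
    constructor
    · rintro ⟨m, h1, h2⟩
      obtain ⟨c, hc, hr⟩ := (ih m b).1 h2
      exact ⟨c, ⟨m, h1, hc⟩, hr⟩
    · rintro ⟨c, ⟨m, h1, hc⟩, hr⟩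
      exact ⟨m, h1, (ih m b).2 ⟨c, hc, hr⟩⟩

end Aux

lemma fdenote_traces {F V : Type} [DecidableEq F] (e : FExp F V) :
    ∀ (α α' : F → V) (s t : List V),
      fdenote e (α, s) (α', t) ↔ ∃ w ∈ traces e α α', wordRel w s t := by
  induction e with
  | zero => intro α α' s t; simp [fdenote, traces]
  | one =>
    intro α α' s t
    simp only [fdenote, traces, Prod.mk.injEq, Set.mem_setOf_eq]
    constructor
    · rintro ⟨rfl, rfl⟩; exact ⟨[], ⟨rfl, rfl⟩, rfl⟩
    · rintro ⟨w, ⟨rfl, rfl⟩, h⟩; exact ⟨rfl, h⟩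
  | test f v =>
    intro α α' s t
    simp only [fdenote, traces, Prod.mk.injEq, Set.mem_setOf_eq]
    constructor
    · rintro ⟨⟨rfl, rfl⟩, hf⟩; exact ⟨[], ⟨rfl, rfl, hf⟩, rfl⟩
    · rintro ⟨w, ⟨rfl, rfl, hf⟩, h⟩; exact ⟨⟨rfl, h.symm⟩, hf⟩
  | assign f v =>
    intro α α' s t
    simp only [fdenote, traces, Prod.mk.injEq, Set.mem_setOf_eq]
    constructor
    · rintro ⟨rfl, rfl⟩; exact ⟨[], ⟨rfl, rfl⟩, rfl⟩
    · rintro ⟨w, ⟨rfl, rfl⟩, h⟩; exact ⟨rfl, h.symm⟩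
  | push v =>
    intro α α' s t
    simp only [fdenote, traces, Prod.mk.injEq, Set.mem_setOf_eq]
    constructor
    · rintro ⟨rfl, rfl⟩
      exact ⟨[pushSym v], ⟨rfl, rfl⟩, ⟨v :: s, rfl, rfl⟩⟩
    · rintro ⟨w, ⟨rfl, rfl⟩, u, h1, h2⟩
      simp only [letterRel, pushSym] at h1
      exact ⟨rfl, h2 ▸ h1⟩
  | pop v =>
    intro α α' s t
    simp only [fdenote, traces, Prod.mk.injEq, Set.mem_setOf_eq]
    constructor
    · rintro ⟨rfl, rfl⟩
      exact ⟨[popSym v], ⟨rfl, rfl⟩, ⟨t, rfl, rfl⟩⟩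
    · rintro ⟨w, ⟨rfl, rfl⟩, u, h1, h2⟩
      simp only [letterRel, popSym] at h1
      exact ⟨rfl, h2 ▸ h1⟩
  | plus e₁ e₂ ih₁ ih₂ =>
    intro α α' s t
    simp only [fdenote, traces, Language.mem_add, ih₁, ih₂]
    constructor
    · rintro (⟨w, hw, h⟩ | ⟨w, hw, h⟩)
      exacts [⟨w, Or.inl hw, h⟩, ⟨w, Or.inr hw, h⟩]
    · rintro ⟨w, hw | hw, h⟩
      exacts [Or.inl ⟨w, hw, h⟩, Or.inr ⟨w, hw, h⟩]
  | seq e₁ e₂ ih₁ ih₂ =>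
    intro α α' s t
    constructor
    · rintro ⟨⟨β, u⟩, h1, h2⟩
      obtain ⟨w₁, hw₁, hr₁⟩ := (ih₁ α β s u).1 h1
      obtain ⟨w₂, hw₂, hr₂⟩ := (ih₂ β α' u t).1 h2
      exact ⟨w₁ ++ w₂, ⟨β, w₁, hw₁, w₂, hw₂, rfl⟩,
        (wordRel_append_s16 _ _ _ _).2 ⟨u, hr₁, hr₂⟩⟩
    · rintro ⟨w, ⟨β, w₁, hw₁, w₂, hw₂, rfl⟩, hr⟩
      obtain ⟨u, hr₁, hr₂⟩ := (wordRel_append_s16 _ _ _ _).1 hr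
      exact ⟨(β, u), (ih₁ α β s u).2 ⟨w₁, hw₁, hr₁⟩, (ih₂ β α' u t).2 ⟨w₂, hw₂, hr₂⟩⟩
  | star e ihe =>
    have key : ∀ (n : ℕ) (α α' : F → V) (s t : List V),
        relPow (fdenote e) n (α, s) (α', t) ↔
          ∃ w ∈ powTr (traces e) n α α', wordRel w s t := by
      intro n
      induction n with
      | zero =>
        intro α α' s t
        simp only [relPow, powTr, Set.mem_setOf_eq, Prod.mk.injEq]
        constructor
        · rintro ⟨rfl, rfl⟩; exact ⟨[], ⟨rfl, rfl⟩, rfl⟩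
        · rintro ⟨w, ⟨rfl, rfl⟩, h⟩; exact ⟨rfl, h⟩
      | succ n ih =>
        intro α α' s t
        rw [relPow_succ']
        constructor
        · rintro ⟨⟨β, u⟩, h1, h2⟩
          obtain ⟨w₁, hw₁, hr₁⟩ := (ih α β s u).1 h1
          obtain ⟨w₂, hw₂, hr₂⟩ := (ihe β α' u t).1 h2
          exact ⟨w₁ ++ w₂, ⟨β, w₁, hw₁, w₂, hw₂, rfl⟩,
            (wordRel_append_s16 _ _ _ _).2 ⟨u, hr₁, hr₂⟩⟩
        · rintro ⟨w, ⟨β, w₁, hw₁, w₂, hw₂, rfl⟩, hr⟩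
          obtain ⟨u, hr₁, hr₂⟩ := (wordRel_append_s16 _ _ _ _).1 hr
          exact ⟨(β, u), (ih α β s u).2 ⟨w₁, hw₁, hr₁⟩, (ihe β α' u t).2 ⟨w₂, hw₂, hr₂⟩⟩
    intro α α' s t
    simp only [fdenote, traces, Set.mem_setOf_eq]
    constructor
    · rintro ⟨n, h⟩
      obtain ⟨w, hw, hr⟩ := (key n α α' s t).1 h
      exact ⟨w, ⟨n, hw⟩, hr⟩
    · rintro ⟨w, ⟨n, hw⟩, hr⟩
      exact ⟨n, (key n α α' s t).2 ⟨w, hw, hr⟩⟩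

lemma fdenote_eq_langRel {F V : Type} [DecidableEq F] (e : FExp F V)
    (α α' : F → V) (s t : List V) :
    fdenote e (α, s) (α', t) ↔ langRel (traces e α α') s t :=
  fdenote_traces e α α' s t

/-- `⟦e₁⟧ = ⟦e₂⟧` iff for all headers `α₁, α₂`,
`overline(traces_{α₁}^{α₂}(e₁)) = overline(traces_{α₁}^{α₂}(e₂))`. -/
theorem stmt16 {F V : Type} [Fintype F] [DecidableEq F] [Fintype V] [Nonempty V]
    (e₁ e₂ : FExp F V) :
    fdenote e₁ = fdenote e₂ ↔
      ∀ α₁ α₂ : F → V, overlineL (traces e₁ α₁ α₂) = overlineL (traces e₂ α₁ α₂) := by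
  constructor
  · intro h α₁ α₂
    rw [overline_eq_iff]
    funext s t
    rw [eq_iff_iff, ← fdenote_eq_langRel, ← fdenote_eq_langRel, h]
  · intro h
    funext p q
    obtain ⟨α, s⟩ := p
    obtain ⟨α', t⟩ := q
    have hl : langRel (traces e₁ α α') = langRel (traces e₂ α α') :=
      (overline_eq_iff _ _).1 (h α α')
    rw [eq_iff_iff, fdenote_eq_langRel, fdenote_eq_langRel, hl]
end
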